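/- Let β ∈ (0,1) with √β ≤ 1/320 and let n satisfy 1/√n < β. Let (G,c) be an edge-colored graph on n vertices that is edge-minimal subject to δ^c(G) ≥ n/2, let D be a D_G-digraph for (G,c) with associated graph G*, and suppose {V1,V2} is a partition of V(G) with |V_i| ≥ (1/2−β)n for i = 1,2 such that the number of arcs of D with one endpoint in V1 and the other in V2 is at most βn². For i = 1,2 set V_i' := {v ∈ V_i : |N_{G*}(v) ∩ V_i| ≥ (1/2−√β)n}. Then |V_i'| ≥ (1/2 − 7√β)n for i = 1,2. -/

import Mathlib

open SimpleGraph

/-- Number of distinct colors on edges incident to `v`. -/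
noncomputable def colorDegree {V C : Type*} (G : SimpleGraph V) (c : Sym2 V → C) (v : V) : ℕ :=
  (c '' (G.incidenceSet v)).ncard

/-- The minimum color degree of `(G, c)` is at least `r`. -/
def MinColorDegreeGe {V C : Type*} (G : SimpleGraph V) (c : Sym2 V → C) (r : ℝ) : Prop :=
  ∀ v : V, r ≤ (colorDegree G c v : ℝ)

/-- `(G, c)` is edge-minimal subject to `δ^c(G) ≥ n/2` where `n` is the number of vertices. -/
def EdgeMinimal {V C : Type*} [Fintype V] (G : SimpleGraph V) (c : Sym2 V → C) : Prop :=
  MinColorDegreeGe G c ((Fintype.card V : ℝ) / 2) ∧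
  ∀ e ∈ G.edgeSet, ¬ MinColorDegreeGe (G.deleteEdges {e}) c ((Fintype.card V : ℝ) / 2)

/-- `d_{F_α}(v)`: the number of edges of color `α` incident to `v`. -/
noncomputable def monoDeg {V C : Type*} (G : SimpleGraph V) (c : Sym2 V → C) (α : C) (v : V) : ℕ :=
  {w : V | G.Adj v w ∧ c s(v, w) = α}.ncard

/-- `D` is a `D_G`-digraph for `(G, c)`: for every color `α` and vertex `v` with
`1 ≤ d_{F_α}(v) ≤ √n`, exactly one arc `v → w` along an edge of color `α`, and no other arcs. -/
def IsDGDigraph {V C : Type*} [Fintype V] (G : SimpleGraph V) (c : Sym2 V → C)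
    (D : V → V → Prop) : Prop :=
  (∀ v w, D v w → G.Adj v w) ∧
  (∀ v w w', D v w → D v w' → c s(v, w) = c s(v, w') → w = w') ∧
  (∀ v w, D v w → (monoDeg G c (c s(v, w)) v : ℝ) ≤ Real.sqrt (Fintype.card V)) ∧
  (∀ v (α : C), 1 ≤ monoDeg G c α v → (monoDeg G c α v : ℝ) ≤ Real.sqrt (Fintype.card V) →
      ∃ w, D v w ∧ c s(v, w) = α)

/-- The bidirected graph `G*` of a digraph `D`: `{u,v}` is an edge iff both `uv` and `vu` are arcs. -/
def Gstar {V : Type*} (D : V → V → Prop) : SimpleGraph V where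
  Adj u v := u ≠ v ∧ D u v ∧ D v u
  symm := ⟨fun u v h => ⟨h.1.symm, h.2.2, h.2.1⟩⟩
  loopless := ⟨fun v h => h.1 rfl⟩

/-- A rainbow path: a path whose edges receive pairwise distinct colors. -/
def IsRainbowPath {V C : Type*} {G : SimpleGraph V} {u v : V} (c : Sym2 V → C)
    (p : G.Walk u v) : Prop :=
  p.IsPath ∧ (p.edges.map c).Nodup

/-- The number of arcs of `D` from `X` to `Y`. -/
noncomputable def arcsBetween {V : Type*} (D : V → V → Prop) (X Y : Set V) : ℕ :=
  {p : V × V | p.1 ∈ X ∧ p.2 ∈ Y ∧ D p.1 p.2}.ncard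

/-- `β`-extremal of type 1 with respect to the digraph `D`. -/
def ExtremalType1 {V : Type*} (β : ℝ) (n : ℕ) (D : V → V → Prop) : Prop :=
  ∃ V1 V2 : Set V, V1 ∪ V2 = Set.univ ∧ Disjoint V1 V2 ∧
    (1 / 2 - β) * n ≤ (V1.ncard : ℝ) ∧ (1 / 2 - β) * n ≤ (V2.ncard : ℝ) ∧
    ((arcsBetween D V1 V2 + arcsBetween D V2 V1 : ℕ) : ℝ) ≤ β * n ^ 2

/-- `β`-extremal of type 2 with respect to the digraph `D`. -/
def ExtremalType2 {V : Type*} (β : ℝ) (n : ℕ) (D : V → V → Prop) : Prop :=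
  ((Gstar D).edgeSet.ncard : ℝ) ≤ β * n ^ 2

/-- `(G, c)` is rainbow `k`-connected. -/
def RainbowKConnected {V C : Type*} (G : SimpleGraph V) (c : Sym2 V → C) (k : ℕ) : Prop :=
  ∀ u v : V, u ≠ v → ∃ p : Fin k → G.Walk u v,
    (∀ i, (p i).IsPath) ∧
    (∀ i j, i ≠ j → p i ≠ p j) ∧
    (∀ i j, i ≠ j → ∀ w, w ∈ (p i).support → w ∈ (p j).support → w = u ∨ w = v) ∧
    Set.InjOn c {e : Sym2 V | ∃ i, e ∈ (p i).edges}

/-- `F_α`: the spanning subgraph of `G` consisting of the edges of color `α`. -/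
def monoSubgraph {V C : Type*} (G : SimpleGraph V) (c : Sym2 V → C) (α : C) : SimpleGraph V where
  Adj u v := G.Adj u v ∧ c s(u, v) = α
  symm := by
    refine ⟨fun u v h => ?_⟩
    refine ⟨h.1.symm, ?_⟩
    rw [Sym2.eq_swap]
    exact h.2
  loopless := ⟨fun v h => G.loopless.1 v h.1⟩

/-- Density of the (ordered) pair `(A, B)` for the relation (digraph) `D`. -/
noncomputable def ddensity {V : Type*} (D : V → V → Prop) (A B : Set V) : ℝ :=
  (arcsBetween D A B : ℝ) / ((A.ncard : ℝ) * (B.ncard : ℝ))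

/-- The pair `(A, B)` is `ε`-regular of density `d` for the relation (digraph) `D`. -/
def RegularPairRel {V : Type*} (D : V → V → Prop) (A B : Set V) (ε d : ℝ) : Prop :=
  ∀ A' ⊆ A, ∀ B' ⊆ B, ε * A.ncard ≤ (A'.ncard : ℝ) → ε * B.ncard ≤ (B'.ncard : ℝ) →
    |ddensity D A' B' - d| ≤ ε

private lemma ncard_eq_filter_card {V : Type*} [Fintype V] (p : V → Prop) [DecidablePred p] :
    {x | p x}.ncard = (Finset.univ.filter p).card := by
  rw [← Set.ncard_coe_finset]
  congr 1
  ext x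
  simp

private lemma outdeg_bound {V C : Type} [Fintype V] (n : ℕ) (hn : Fintype.card V = n)
    (hn1 : 1 ≤ n) (G : SimpleGraph V) (c : Sym2 V → C)
    (hmin : MinColorDegreeGe G c ((Fintype.card V : ℝ) / 2))
    (D : V → V → Prop) (hD : IsDGDigraph G c D) (v : V) :
    (n : ℝ) / 2 - Real.sqrt n ≤ (({w | D v w} : Set V).ncard : ℝ) := by
  classical
  haveI hVne : Nonempty V := Fintype.card_pos_iff.mp (by rw [hn]; exact hn1)
  set sn := Real.sqrt n with hsndef
  have hn0 : (0:ℝ) < n := by exact_mod_cast hn1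
  have hsn0 : 0 < sn := Real.sqrt_pos.mpr hn0
  have hsnsq : sn * sn = (n:ℝ) := Real.mul_self_sqrt hn0.le
  set Efin : Finset (Sym2 V) := Finset.univ.filter (· ∈ G.incidenceSet v) with hEfin
  set Ifin : Finset C := Efin.image c with hIfin
  have hIcard : (colorDegree G c v : ℝ) = (Ifin.card : ℝ) := by
    have hset : c '' (G.incidenceSet v) = ↑Ifin := by
      ext α
      simp [hIfin, hEfin, Set.mem_image]
    rw [colorDegree, hset, Set.ncard_coe_finset]
  have hIlb : (n : ℝ) / 2 ≤ (Ifin.card : ℝ) := by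
    have h := hmin v
    rw [hn] at h
    linarith [hIcard]
  set mdF : C → Finset V := fun α => Finset.univ.filter (fun w => G.Adj v w ∧ c s(v, w) = α)
    with hmdFdef
  have hmdF : ∀ α, monoDeg G c α v = (mdF α).card := by
    intro α
    rw [monoDeg, show {w : V | G.Adj v w ∧ c s(v, w) = α} = (↑(mdF α) : Set V) by
      ext w; simp [hmdFdef]]
    exact Set.ncard_coe_finset _
  have hpos : ∀ α ∈ Ifin, 1 ≤ monoDeg G c α v := by
    intro α hα
    rw [hIfin] at hα
    obtain ⟨e, he, rfl⟩ := Finset.mem_image.mp hα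
    rw [hEfin, Finset.mem_filter] at he
    obtain ⟨-, heE, hve⟩ := he
    obtain ⟨w, rfl⟩ := Sym2.mem_iff_exists.mp hve
    have hadj : G.Adj v w := G.mem_edgeSet.mp heE
    rw [hmdF]
    refine Finset.card_pos.mpr ⟨w, ?_⟩
    simp [hmdFdef, hadj]
  set Heavy := Ifin.filter (fun α => sn < ((monoDeg G c α v : ℕ) : ℝ)) with hHdef
  set Light := Ifin.filter (fun α => ¬ sn < ((monoDeg G c α v : ℕ) : ℝ)) with hLdef
  have hLH : Heavy.card + Light.card = Ifin.card :=
    Finset.card_filter_add_card_filter_not _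
  have hdisjoint : ∀ α ∈ Heavy, ∀ β' ∈ Heavy, α ≠ β' → Disjoint (mdF α) (mdF β') := by
    intro α _ β' _ hne
    rw [Finset.disjoint_left]
    intro w hwα hwβ
    simp only [hmdFdef, Finset.mem_filter] at hwα hwβ
    exact hne (by rw [← hwα.2.2, hwβ.2.2])
  have hsumcard : ∑ α ∈ Heavy, (mdF α).card = (Heavy.biUnion mdF).card :=
    (Finset.card_biUnion hdisjoint).symm
  have hUle : ∑ α ∈ Heavy, (mdF α).card ≤ n := by
    rw [hsumcard, ← hn]
    exact Finset.card_le_univ _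
  have hsmul : (Heavy.card : ℝ) * sn ≤ ∑ α ∈ Heavy, ((mdF α).card : ℝ) := by
    have h := Finset.card_nsmul_le_sum Heavy (fun α => ((mdF α).card : ℝ)) sn ?_
    · rwa [nsmul_eq_mul] at h
    · intro α hα
      rw [hHdef, Finset.mem_filter] at hα
      have h2 := hα.2
      rw [hmdF] at h2
      exact h2.le
  have hsumcast : ∑ α ∈ Heavy, ((mdF α).card : ℝ) ≤ (n : ℝ) := by
    rw [← Nat.cast_sum]
    exact_mod_cast hUle
  have hHeavy : (Heavy.card : ℝ) ≤ sn := by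
    nlinarith [hsmul, hsumcast, hsn0, hsnsq]
  have hLight : (n:ℝ)/2 - sn ≤ (Light.card : ℝ) := by
    have h : (Heavy.card : ℝ) + (Light.card : ℝ) = (Ifin.card : ℝ) := by exact_mod_cast hLH
    linarith
  have hex : ∀ α ∈ Light, ∃ w, D v w ∧ c s(v, w) = α := by
    intro α hα
    rw [hLdef, Finset.mem_filter] at hα
    obtain ⟨hαI, hαle⟩ := hα
    refine hD.2.2.2 v α (hpos α hαI) ?_
    rw [hn]
    exact le_of_not_gt hαle
  set f : C → V := fun α => if h : ∃ w, D v w ∧ c s(v, w) = α then h.choose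
    else Classical.arbitrary V with hfdef
  have hf : ∀ α ∈ Light, D v (f α) ∧ c s(v, f α) = α := by
    intro α hα
    have h := hex α hα
    rw [hfdef]
    simp only [dif_pos h]
    exact h.choose_spec
  have hinj : Light.card ≤ (Finset.univ.filter (fun w => D v w)).card := by
    apply Finset.card_le_card_of_injOn f
    · intro α hα
      simp only [Finset.mem_coe, Finset.mem_filter, Finset.mem_univ, true_and]
      exact (hf α hα).1
    · intro α hα α' hα' heq
      rw [← (hf α hα).2, ← (hf α' hα').2, heq]
  rw [ncard_eq_filter_card (fun w => D v w)]
  have hinj' : (Light.card : ℝ) ≤ ((Finset.univ.filter (fun w => D v w)).card : ℝ) := by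
    exact_mod_cast hinj
  linarith
set_option maxHeartbeats 1000000 in
private lemma aux_half {V : Type} [Fintype V] (β : ℝ) (hβ0 : 0 < β)
    (hβ' : Real.sqrt β ≤ 1/320) (n : ℕ) (hn : Fintype.card V = n) (hn1 : 1 ≤ n)
    (hns : (1:ℝ) / Real.sqrt n < β)
    (D : V → V → Prop) (hDirr : ∀ v w, D v w → v ≠ w)
    (hout : ∀ v : V, (n : ℝ)/2 - Real.sqrt n ≤ (({w | D v w} : Set V).ncard : ℝ))
    (X Y : Set V) (hunion : X ∪ Y = Set.univ) (hdisj : Disjoint X Y)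
    (hX : (1/2 - β) * n ≤ (X.ncard : ℝ)) (hY : (1/2 - β) * n ≤ (Y.ncard : ℝ))
    (harc : ((arcsBetween D X Y : ℕ) : ℝ) ≤ β * n ^ 2) :
    (1/2 - 7 * Real.sqrt β) * n ≤
      (({v ∈ X | (1/2 - Real.sqrt β) * n ≤
          (((Gstar D).neighborSet v ∩ X).ncard : ℝ)} : Set V).ncard : ℝ) := by
  classical
  set s := Real.sqrt β with hsdef
  set sn := Real.sqrt n with hsndef
  have hn0 : (0:ℝ) < n := by exact_mod_cast hn1
  have hsn0 : 0 < sn := Real.sqrt_pos.mpr hn0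
  have hsnsq : sn * sn = (n:ℝ) := Real.mul_self_sqrt hn0.le
  have hs0 : 0 < s := Real.sqrt_pos.mpr hβ0
  have hssq : s * s = β := Real.mul_self_sqrt hβ0.le
  have hs1 : s ≤ 1 := by linarith
  have hsnb : sn ≤ β * n := by
    have h1 : 1 < β * sn := by
      rw [div_lt_iff₀ hsn0] at hns; linarith
    nlinarith [hsn0, hsnsq]
  -- Finset counterparts
  set FX : Finset V := Finset.univ.filter (· ∈ X) with hFX
  set FY : Finset V := Finset.univ.filter (· ∈ Y) with hFY
  set m := FX.card with hm
  have hXcard : X.ncard = m := by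
    rw [hm, hFX, ← ncard_eq_filter_card (· ∈ X), Set.setOf_mem_eq]
  have hYcard : Y.ncard = FY.card := by
    rw [hFY, ← ncard_eq_filter_card (· ∈ Y), Set.setOf_mem_eq]
  have hmn : m ≤ n := by
    rw [hm, hFX, ← hn, ← Finset.card_univ]
    exact Finset.card_le_card (Finset.filter_subset _ _)
  have hpart : ∀ w : V, (w ∈ X ∧ w ∉ Y) ∨ (w ∈ Y ∧ w ∉ X) := by
    intro w
    have hw : w ∈ X ∪ Y := hunion ▸ Set.mem_univ w
    rcases hw with h | h
    · exact Or.inl ⟨h, fun h2 => Set.disjoint_left.mp hdisj h h2⟩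
    · exact Or.inr ⟨h, fun h2 => Set.disjoint_left.mp hdisj h2 h⟩
  have hcardsum : m + FY.card = n := by
    rw [hm, ← hn, ← Finset.card_univ, ← Finset.card_union_of_disjoint (s := FX) (t := FY) ?hd]
    · congr 1
      ext w
      simp only [hFX, hFY, Finset.mem_union, Finset.mem_filter, Finset.mem_univ, true_and]
      constructor
      · intro _; trivial
      · intro _
        rcases hpart w with ⟨h, _⟩ | ⟨h, _⟩
        · exact Or.inl h
        · exact Or.inr h
    case hd =>
      rw [Finset.disjoint_left]
      intro a ha hb
      simp only [hFX, Finset.mem_filter, Finset.mem_univ, true_and] at ha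
      simp only [hFY, Finset.mem_filter, Finset.mem_univ, true_and] at hb
      exact Set.disjoint_left.mp hdisj ha hb
  -- degree counters
  set o : V → ℕ := fun v => (Finset.univ.filter (fun w => D v w)).card with ho
  set o1 : V → ℕ := fun v => (Finset.univ.filter (fun w => w ∈ X ∧ D v w)).card with ho1
  set o2 : V → ℕ := fun v => (Finset.univ.filter (fun w => w ∈ Y ∧ D v w)).card with ho2
  set i1 : V → ℕ := fun z => (Finset.univ.filter (fun u => u ∈ X ∧ D u z)).card with hi1
  have houtF : ∀ v, (n:ℝ)/2 - sn ≤ (o v : ℝ) := by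
    intro v
    have h := hout v
    rwa [ncard_eq_filter_card (fun w => D v w)] at h
  have hsplit : ∀ v, o v = o1 v + o2 v := by
    intro v
    simp only [ho, ho1, ho2, Finset.card_filter]
    rw [← Finset.sum_add_distrib]
    refine Finset.sum_congr rfl fun w _ => ?_
    rcases hpart w with ⟨hw1, hw2⟩ | ⟨hw1, hw2⟩ <;> by_cases hd : D v w <;>
      simp [hw1, hw2, hd]
  have harcsum : ∑ v ∈ FX, o2 v = arcsBetween D X Y := by
    have hR : arcsBetween D X Y =
        ∑ v : V, ∑ w : V, (if v ∈ X ∧ w ∈ Y ∧ D v w then 1 else 0) := by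
      rw [arcsBetween, show {p : V × V | p.1 ∈ X ∧ p.2 ∈ Y ∧ D p.1 p.2} =
          (↑(Finset.univ.filter (fun p : V × V => p.1 ∈ X ∧ p.2 ∈ Y ∧ D p.1 p.2)) : Set (V × V))
          by ext p; simp]
      rw [Set.ncard_coe_finset, Finset.card_filter, Fintype.sum_prod_type]
    have hL : ∑ v ∈ FX, o2 v =
        ∑ v : V, ∑ w : V, (if v ∈ X ∧ w ∈ Y ∧ D v w then 1 else 0) := by
      rw [hFX, Finset.sum_filter]
      refine Finset.sum_congr rfl fun v _ => ?_
      by_cases hv : v ∈ X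
      · simp only [hv, if_true, ho2, Finset.card_filter]
        refine Finset.sum_congr rfl fun w _ => ?_
        simp [hv]
      · simp [hv]
    rw [hL, hR]
  have hdouble : ∑ z ∈ FX, i1 z = ∑ v ∈ FX, o1 v := by
    have hL : ∑ z ∈ FX, i1 z =
        ∑ z : V, ∑ u : V, (if u ∈ X ∧ z ∈ X ∧ D u z then 1 else 0) := by
      rw [hFX, Finset.sum_filter]
      refine Finset.sum_congr rfl fun z _ => ?_
      by_cases hz : z ∈ X
      · simp only [hz, if_true, hi1, Finset.card_filter]
        refine Finset.sum_congr rfl fun u _ => ?_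
        simp [hz]
      · simp [hz]
    have hR : ∑ v ∈ FX, o1 v =
        ∑ v : V, ∑ w : V, (if v ∈ X ∧ w ∈ X ∧ D v w then 1 else 0) := by
      rw [hFX, Finset.sum_filter]
      refine Finset.sum_congr rfl fun v _ => ?_
      by_cases hv : v ∈ X
      · simp only [hv, if_true, ho1, Finset.card_filter]
        refine Finset.sum_congr rfl fun w _ => ?_
        simp [hv]
      · simp [hv]
    rw [hL, hR, Finset.sum_comm]
  have hi1m : ∀ z, i1 z ≤ m := by
    intro z
    rw [hi1, hm, hFX]
    refine Finset.card_le_card fun u hu => ?_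
    simp only [Finset.mem_filter, Finset.mem_univ, true_and] at hu ⊢
    exact hu.1
  -- real-valued sums
  have hSo : (m : ℝ) * ((n:ℝ)/2 - sn) ≤ ∑ v ∈ FX, (o v : ℝ) := by
    have h := Finset.card_nsmul_le_sum FX (fun v => (o v : ℝ)) ((n:ℝ)/2 - sn)
      (fun v _ => houtF v)
    rwa [nsmul_eq_mul, ← hm] at h
  have hSo2 : ∑ v ∈ FX, (o2 v : ℝ) ≤ β * n^2 := by
    have h : ((∑ v ∈ FX, o2 v : ℕ) : ℝ) ≤ β * n^2 := by rw [harcsum]; exact harc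
    rwa [Nat.cast_sum] at h
  have hSo1 : (m:ℝ) * ((n:ℝ)/2 - sn) - β * n^2 ≤ ∑ v ∈ FX, (o1 v : ℝ) := by
    have h1 : ∑ v ∈ FX, (o v : ℝ) = ∑ v ∈ FX, (o1 v : ℝ) + ∑ v ∈ FX, (o2 v : ℝ) := by
      rw [← Finset.sum_add_distrib]
      exact Finset.sum_congr rfl fun v _ => by rw [hsplit v]; push_cast; ring
    linarith
  have hSi1 : (m:ℝ) * ((n:ℝ)/2 - sn) - β * n^2 ≤ ∑ z ∈ FX, (i1 z : ℝ) := by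
    have h : ∑ z ∈ FX, (i1 z : ℝ) = ∑ v ∈ FX, (o1 v : ℝ) := by
      rw [← Nat.cast_sum, ← Nat.cast_sum, hdouble]
    linarith
  have hm_ub : (m : ℝ) ≤ (1/2 + β) * n := by
    have hYm : (1/2 - β) * n ≤ (FY.card : ℝ) := by
      rw [hYcard] at hY; exact_mod_cast hY
    have hsum : (m:ℝ) + (FY.card : ℝ) = n := by exact_mod_cast hcardsum
    linarith
  have hmnr : (m:ℝ) ≤ n := by exact_mod_cast hmn
  have hSdef : ∑ z ∈ FX, ((m:ℝ) - (i1 z : ℝ)) ≤ 3 * β * n^2 := by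
    have h1 : ∑ z ∈ FX, ((m:ℝ) - (i1 z : ℝ)) = (m:ℝ) * m - ∑ z ∈ FX, (i1 z : ℝ) := by
      rw [Finset.sum_sub_distrib, Finset.sum_const, ← hm, nsmul_eq_mul]
    rw [h1]
    have e1 : (m:ℝ) * sn ≤ (n:ℝ) * (β * n) :=
      mul_le_mul hmnr hsnb (Real.sqrt_nonneg _) hn0.le
    have e2 : (m:ℝ) * ((m:ℝ) - (n:ℝ)/2) ≤ (n:ℝ) * (β * n) := by
      rcases le_or_gt (m:ℝ) ((n:ℝ)/2) with h | h
      · have k1 : (m:ℝ) * ((m:ℝ) - (n:ℝ)/2) ≤ 0 :=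
          mul_nonpos_iff.mpr (Or.inl ⟨Nat.cast_nonneg _, by linarith⟩)
        have k2 : (0:ℝ) ≤ (n:ℝ) * (β * n) := by positivity
        linarith
      · have hd : (m:ℝ) - (n:ℝ)/2 ≤ β * n := by linarith
        have hd0 : (0:ℝ) ≤ (m:ℝ) - (n:ℝ)/2 := by linarith
        exact mul_le_mul hmnr hd hd0 hn0.le
    nlinarith [hSi1, e1, e2]
  set g : V → ℝ := fun v => (o2 v : ℝ) + ((m:ℝ) - (i1 v : ℝ)) with hg
  have hTot : ∑ v ∈ FX, g v ≤ 4 * β * n^2 := by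
    simp only [hg]
    rw [Finset.sum_add_distrib]
    linarith
  have hg0 : ∀ v ∈ FX, 0 ≤ g v := by
    intro v _
    simp only [hg]
    have h1 : (i1 v : ℝ) ≤ m := by exact_mod_cast hi1m v
    have h2 : (0:ℝ) ≤ o2 v := Nat.cast_nonneg _
    linarith
  set Bad := FX.filter (fun v => s * n - sn < g v) with hBad
  set Good := FX.filter (fun v => ¬ (s * n - sn < g v)) with hGood
  have hBG : Bad.card + Good.card = m := by
    rw [hBad, hGood, hm]
    exact Finset.card_filter_add_card_filter_not _
  have hBadSum : (Bad.card : ℝ) * (s * n - sn) ≤ 4 * β * n^2 := by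
    have h1 := Finset.card_nsmul_le_sum Bad g (s * n - sn)
      (fun v hv => (Finset.mem_filter.mp hv).2.le)
    have h2 : ∑ v ∈ Bad, g v ≤ ∑ v ∈ FX, g v :=
      Finset.sum_le_sum_of_subset_of_nonneg (Finset.filter_subset _ _)
        (fun v hv _ => hg0 v hv)
    rw [nsmul_eq_mul] at h1
    linarith
  have hT : 319/320 * (s * n) ≤ s * n - sn := by
    have h1 : s * (s * n) ≤ 1/320 * (s * n) :=
      mul_le_mul_of_nonneg_right hβ' (by positivity)
    have h2 : sn ≤ s * (s * n) := by nlinarith [hsnb, hssq]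
    linarith
  have hBadCard : (Bad.card : ℝ) ≤ 5 * (s * n) := by
    by_contra hcon
    push_neg at hcon
    have hp : (0:ℝ) < 319/320 * (s * n) := by positivity
    have k1 : (Bad.card:ℝ) * (319/320 * (s * n)) ≤ (Bad.card:ℝ) * (s * n - sn) :=
      mul_le_mul_of_nonneg_left hT (Nat.cast_nonneg _)
    have k3 : 5 * (s * n) * (319/320 * (s * n)) < (Bad.card:ℝ) * (319/320 * (s * n)) :=
      mul_lt_mul_of_pos_right hcon hp
    nlinarith [k1, k3, hBadSum, hssq]
  have hGoodsub : ∀ v ∈ Good, v ∈ X ∧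
      (1/2 - s) * n ≤ (((Gstar D).neighborSet v ∩ X).ncard : ℝ) := by
    intro v hv
    rw [hGood, Finset.mem_filter] at hv
    obtain ⟨hvFX, hvg⟩ := hv
    rw [hFX, Finset.mem_filter] at hvFX
    have hvX : v ∈ X := hvFX.2
    push_neg at hvg
    refine ⟨hvX, ?_⟩
    have hnb : ((Gstar D).neighborSet v ∩ X).ncard =
        (Finset.univ.filter (fun w => (Gstar D).Adj v w ∧ w ∈ X)).card := by
      rw [show (Gstar D).neighborSet v ∩ X = {w | (Gstar D).Adj v w ∧ w ∈ X} by
        ext w; simp [SimpleGraph.mem_neighborSet, Set.mem_inter_iff]]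
      exact ncard_eq_filter_card _
    set NF := Finset.univ.filter (fun w => (Gstar D).Adj v w ∧ w ∈ X) with hNF
    set A := Finset.univ.filter (fun w => w ∈ X ∧ D v w) with hA
    set B := Finset.univ.filter (fun u => u ∈ X ∧ D u v) with hB
    have hAcard : A.card = o1 v := rfl
    have hBcard : B.card = i1 v := rfl
    have hsub1 : A ∩ B ⊆ NF := by
      intro w hw
      rw [Finset.mem_inter] at hw
      obtain ⟨hwA, hwB⟩ := hw
      rw [hA, Finset.mem_filter] at hwA
      rw [hB, Finset.mem_filter] at hwB
      rw [hNF, Finset.mem_filter]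
      exact ⟨Finset.mem_univ _, (⟨hDirr v w hwA.2.2, hwA.2.2, hwB.2.2⟩ : v ≠ w ∧ D v w ∧ D w v), hwA.2.1⟩
    have hsub2 : A ∪ B ⊆ FX := by
      intro w hw
      rw [Finset.mem_union] at hw
      rw [hFX, Finset.mem_filter]
      rcases hw with h | h
      · rw [hA, Finset.mem_filter] at h; exact ⟨Finset.mem_univ _, h.2.1⟩
      · rw [hB, Finset.mem_filter] at h; exact ⟨Finset.mem_univ _, h.2.1⟩
    have hcards : A.card + B.card ≤ m + NF.card := by
      rw [← Finset.card_union_add_card_inter]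
      exact Nat.add_le_add (by rw [hm]; exact Finset.card_le_card hsub2)
        (Finset.card_le_card hsub1)
    have hov := houtF v
    have c1 : (o1 v : ℝ) + (i1 v : ℝ) ≤ (m:ℝ) + (NF.card : ℝ) := by
      rw [← hAcard, ← hBcard]
      exact_mod_cast hcards
    have c2 : (o v : ℝ) = (o1 v : ℝ) + (o2 v : ℝ) := by exact_mod_cast hsplit v
    simp only [hg] at hvg
    rw [hnb]
    linarith
  have hGoalcard :
      ({v ∈ X | (1/2 - s) * n ≤ (((Gstar D).neighborSet v ∩ X).ncard : ℝ)} : Set V).ncard =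
      (Finset.univ.filter (fun v => v ∈ X ∧
        (1/2 - s) * n ≤ (((Gstar D).neighborSet v ∩ X).ncard : ℝ))).card :=
    ncard_eq_filter_card _
  have hsubG : Good ⊆ Finset.univ.filter (fun v => v ∈ X ∧
      (1/2 - s) * n ≤ (((Gstar D).neighborSet v ∩ X).ncard : ℝ)) := by
    intro v hv
    rw [Finset.mem_filter]
    exact ⟨Finset.mem_univ _, hGoodsub v hv⟩
  have hXm : (1/2 - β) * n ≤ (m:ℝ) := by
    rw [hXcard] at hX; exact_mod_cast hX
  have hBGr : (Bad.card : ℝ) + (Good.card : ℝ) = (m:ℝ) := by exact_mod_cast hBG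
  have hβs : β * n ≤ s * n := by
    have h : β ≤ s := by nlinarith [hssq, hs1, hs0]
    exact mul_le_mul_of_nonneg_right h hn0.le
  rw [hGoalcard]
  calc (1/2 - 7 * s) * n ≤ (Good.card : ℝ) := by linarith
    _ ≤ _ := by exact_mod_cast Finset.card_le_card hsubG
theorem statement8 (β : ℝ) (hβ : β ∈ Set.Ioo (0 : ℝ) 1) (hβ' : Real.sqrt β ≤ 1 / 320)
    (V C : Type) [Fintype V] (n : ℕ) (hn : Fintype.card V = n)
    (hns : (1 : ℝ) / Real.sqrt n < β)
    (G : SimpleGraph V) (c : Sym2 V → C) (hmin : EdgeMinimal G c)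
    (D : V → V → Prop) (hD : IsDGDigraph G c D)
    (V1 V2 : Set V) (hpart : V1 ∪ V2 = Set.univ) (hdisj : Disjoint V1 V2)
    (h1 : (1 / 2 - β) * n ≤ (V1.ncard : ℝ)) (h2 : (1 / 2 - β) * n ≤ (V2.ncard : ℝ))
    (harcs : ((arcsBetween D V1 V2 + arcsBetween D V2 V1 : ℕ) : ℝ) ≤ β * n ^ 2) :
    (1 / 2 - 7 * Real.sqrt β) * n ≤
      (({v ∈ V1 | (1 / 2 - Real.sqrt β) * n ≤
          (((Gstar D).neighborSet v ∩ V1).ncard : ℝ)} : Set V).ncard : ℝ) ∧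
    (1 / 2 - 7 * Real.sqrt β) * n ≤
      (({v ∈ V2 | (1 / 2 - Real.sqrt β) * n ≤
          (((Gstar D).neighborSet v ∩ V2).ncard : ℝ)} : Set V).ncard : ℝ) := by
  classical
  rcases Nat.eq_zero_or_pos n with h0 | hn1
  · subst h0
    constructor <;>
    · rw [Nat.cast_zero, mul_zero]
      exact Nat.cast_nonneg _
  · have hDirr : ∀ v w, D v w → v ≠ w := fun v w h => (hD.1 v w h).ne
    have hout : ∀ v : V, (n:ℝ)/2 - Real.sqrt n ≤ (({w | D v w} : Set V).ncard : ℝ) :=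
      fun v => outdeg_bound n hn hn1 G c hmin.1 D hD v
    have hpos1 : (0:ℝ) ≤ (arcsBetween D V1 V2 : ℕ) := Nat.cast_nonneg _
    have hpos2 : (0:ℝ) ≤ (arcsBetween D V2 V1 : ℕ) := Nat.cast_nonneg _
    have hcast : ((arcsBetween D V1 V2 : ℕ) : ℝ) + ((arcsBetween D V2 V1 : ℕ) : ℝ) ≤ β * n ^ 2 := by
      push_cast at harcs
      linarith
    have harc1 : ((arcsBetween D V1 V2 : ℕ) : ℝ) ≤ β * n ^ 2 := by linarith
    have harc2 : ((arcsBetween D V2 V1 : ℕ) : ℝ) ≤ β * n ^ 2 := by linarith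
    exact ⟨aux_half β hβ.1 hβ' n hn hn1 hns D hDirr hout V1 V2 hpart hdisj h1 h2 harc1,
      aux_half β hβ.1 hβ' n hn hn1 hns D hDirr hout V2 V1
        (by rw [Set.union_comm]; exact hpart) hdisj.symm h2 h1 harc2⟩
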